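/- arXiv:2411.04971 — 5 statements merged into one kernel-verified Lean document; each statement's English description precedes it below -/
import Mathlib

section
/- (Cole–Hopf direction) Let t₀ ∈ ℝ and A(t) = 1/(t - t₀). If ψ : ℝ × ℝ → ℝ is smooth, strictly positive, and solves the heat equation ∂_t ψ = ∂_xx ψ, then u(x,t) := (1/A(t)) · ∂_x log(ψ(x,t)) = (t - t₀) ∂_x ψ / ψ solves the non-homogeneous Burgers equation ∂_t u - A(t) ∂_x(u²) = ∂_xx u + A(t) u, for all t ≠ t₀. -/
lemma aux_smooth_fderiv (F : ℝ × ℝ → ℝ) (hF : ContDiff ℝ (⊤ : ℕ∞) F) (v : ℝ × ℝ) :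
    ContDiff ℝ (⊤ : ℕ∞) (fun p => fderiv ℝ F p v) :=
  (ContinuousLinearMap.apply ℝ ℝ v).contDiff.comp (hF.fderiv_right (by simp))

lemma aux_hasDerivAt_x (F : ℝ × ℝ → ℝ) (hF : ContDiff ℝ (⊤ : ℕ∞) F) (x t : ℝ) :
    HasDerivAt (fun z => F (z, t)) (fderiv ℝ F (x, t) (1, 0)) x := by
  have h1 : HasDerivAt (fun z : ℝ => ((z : ℝ), t)) ((1 : ℝ), (0 : ℝ)) x :=
    (hasDerivAt_id x).prodMk (hasDerivAt_const x t)
  exact ((hF.differentiable (by simp) (x, t)).hasFDerivAt).comp_hasDerivAt x h1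

lemma aux_hasDerivAt_t (F : ℝ × ℝ → ℝ) (hF : ContDiff ℝ (⊤ : ℕ∞) F) (x t : ℝ) :
    HasDerivAt (fun s => F (x, s)) (fderiv ℝ F (x, t) (0, 1)) t := by
  have h1 : HasDerivAt (fun s : ℝ => ((x : ℝ), s)) ((0 : ℝ), (1 : ℝ)) t :=
    (hasDerivAt_const t x).prodMk (hasDerivAt_id t)
  exact ((hF.differentiable (by simp) (x, t)).hasFDerivAt).comp_hasDerivAt t h1

lemma aux_clairaut (F : ℝ × ℝ → ℝ) (hF : ContDiff ℝ (⊤ : ℕ∞) F) (p v w : ℝ × ℝ) :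
    fderiv ℝ (fun q => fderiv ℝ F q v) p w = fderiv ℝ (fun q => fderiv ℝ F q w) p v := by
  have hdF : Differentiable ℝ (fderiv ℝ F) :=
    (hF.fderiv_right (m := (⊤ : ℕ∞)) ((by simp))).differentiable (by simp)
  have key : ∀ a : ℝ × ℝ, fderiv ℝ (fun q => fderiv ℝ F q a) p
      = (ContinuousLinearMap.apply ℝ ℝ a).comp (fderiv ℝ (fderiv ℝ F) p) := by
    intro a
    exact (((ContinuousLinearMap.apply ℝ ℝ a).hasFDerivAt).comp p
      (hdF p).hasFDerivAt).fderiv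
  rw [key, key]
  have hsym : IsSymmSndFDerivAt ℝ F p :=
    hF.contDiffAt.isSymmSndFDerivAt (by rw [minSmoothness_of_isRCLikeNormedField]; exact WithTop.coe_le_coe.mpr (le_top : (2 : ℕ∞) ≤ ⊤))
  simpa using hsym w v

theorem cole_hopf_direct (t₀ : ℝ) (A : ℝ → ℝ) (hA : ∀ t, A t = 1 / (t - t₀))
    (ψ : ℝ → ℝ → ℝ)
    (hsmooth : ContDiff ℝ (⊤ : ℕ∞) (fun p : ℝ × ℝ => ψ p.1 p.2))
    (hpos : ∀ x t, 0 < ψ x t)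
    (hheat : ∀ x t, deriv (fun s : ℝ => ψ x s) t
      = deriv (fun y : ℝ => deriv (fun z : ℝ => ψ z t) y) x)
    (u : ℝ → ℝ → ℝ)
    (hu : ∀ x t, u x t = (1 / A t) * deriv (fun y : ℝ => Real.log (ψ y t)) x) :
    ∀ x t : ℝ, t ≠ t₀ →
      deriv (fun s : ℝ => u x s) t - A t * deriv (fun y : ℝ => (u y t) ^ 2) x
        = deriv (fun y : ℝ => deriv (fun z : ℝ => u z t) y) x + A t * u x t := by
  set F : ℝ × ℝ → ℝ := fun p => ψ p.1 p.2 with hFdef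
  set Fx : ℝ × ℝ → ℝ := fun p => fderiv ℝ F p (1, 0) with hFxdef
  have hFxs : ContDiff ℝ (⊤ : ℕ∞) Fx := aux_smooth_fderiv F hsmooth _
  set Fxx : ℝ × ℝ → ℝ := fun p => fderiv ℝ Fx p (1, 0) with hFxxdef
  have hFxxs : ContDiff ℝ (⊤ : ℕ∞) Fxx := aux_smooth_fderiv Fx hFxs _
  -- basic partial derivatives
  have hX : ∀ y s : ℝ, HasDerivAt (fun z => ψ z s) (Fx (y, s)) y := fun y s =>
    aux_hasDerivAt_x F hsmooth y s
  have hXx : ∀ y s : ℝ, HasDerivAt (fun z => Fx (z, s)) (Fxx (y, s)) y := fun y s =>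
    aux_hasDerivAt_x Fx hFxs y s
  have hXxx : ∀ y s : ℝ, HasDerivAt (fun z => Fxx (z, s)) (fderiv ℝ Fxx (y, s) (1, 0)) y :=
    fun y s => aux_hasDerivAt_x Fxx hFxxs y s
  have hFne : ∀ y s : ℝ, F (y, s) ≠ 0 := fun y s => ne_of_gt (hpos y s)
  -- heat equation in terms of Fxx
  have hheat' : ∀ p : ℝ × ℝ, fderiv ℝ F p (0, 1) = Fxx p := by
    rintro ⟨y, s⟩
    have h1 := hheat y s
    rw [(aux_hasDerivAt_t F hsmooth y s).deriv] at h1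
    have h2 : (fun y' : ℝ => deriv (fun z : ℝ => ψ z s) y') = fun y' => Fx (y', s) :=
      funext fun y' => (hX y' s).deriv
    rw [h2, (hXx y s).deriv] at h1
    exact h1
  -- formula for u
  have hu' : ∀ y s : ℝ, u y s = (s - t₀) * (Fx (y, s) / F (y, s)) := by
    intro y s
    have hlog : deriv (fun z : ℝ => Real.log (ψ z s)) y = Fx (y, s) / F (y, s) :=
      ((hX y s).log (ne_of_gt (hpos y s))).deriv
    rw [hu, hlog, hA, one_div_one_div]
  intro x t ht
  have htt : t - t₀ ≠ 0 := sub_ne_zero.mpr ht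
  -- notation for point values
  set P : ℝ := F (x, t) with hP
  set P1 : ℝ := Fx (x, t) with hP1
  set P2 : ℝ := Fxx (x, t) with hP2
  set P3 : ℝ := fderiv ℝ Fxx (x, t) (1, 0) with hP3
  have hPne : P ≠ 0 := hFne x t
  -- mixed derivative
  have hmix : fderiv ℝ Fx (x, t) (0, 1) = P3 := by
    have h1 := aux_clairaut F hsmooth (x, t) (1, 0) (0, 1)
    have h2 : (fun q : ℝ × ℝ => fderiv ℝ F q (0, 1)) = Fxx := funext fun q => hheat' q
    rw [h2] at h1
    exact h1
  -- time derivative of u x ·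
  have hT1 : deriv (fun s : ℝ => u x s) t
      = 1 * (P1 / P) + (t - t₀) * ((P3 * P - P1 * P2) / P ^ 2) := by
    have ha : HasDerivAt (fun s => Fx (x, s)) P3 t := by
      have := aux_hasDerivAt_t Fx hFxs x t
      rwa [hmix] at this
    have hb : HasDerivAt (fun s => F (x, s)) P2 t := by
      have := aux_hasDerivAt_t F hsmooth x t
      rwa [hheat' (x, t)] at this
    have hc : HasDerivAt (fun s : ℝ => s - t₀) 1 t := (hasDerivAt_id t).sub_const t₀
    have hd := hc.mul (ha.div hb hPne)
    have he : (fun s : ℝ => u x s) = fun s => (s - t₀) * (Fx (x, s) / F (x, s)) :=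
      funext fun s => hu' x s
    rw [he]
    exact hd.deriv
  -- spatial derivative of u² at (·, t)
  have hux : ∀ y : ℝ, HasDerivAt (fun z => u z t)
      ((t - t₀) * ((Fxx (y, t) * F (y, t) - Fx (y, t) * Fx (y, t)) / F (y, t) ^ 2)) y := by
    intro y
    have h1 := ((hXx y t).mul (hX y t)).sub ((hX y t).mul (hX y t))
    have h2 := ((hXx y t).div (hX y t) (hFne y t)).const_mul (t - t₀)
    have he : (fun z : ℝ => u z t) = fun z => (t - t₀) * (Fx (z, t) / F (z, t)) :=
      funext fun z => hu' z t
    rw [he]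
    exact h2
  have hT2 : deriv (fun y : ℝ => (u y t) ^ 2) x
      = 2 * (u x t) ^ 1 * ((t - t₀) * ((P2 * P - P1 * P1) / P ^ 2)) := by
    exact ((hux x).pow 2).deriv
  -- second spatial derivative
  set g : ℝ → ℝ := fun y =>
    (t - t₀) * ((Fxx (y, t) * F (y, t) - Fx (y, t) * Fx (y, t)) / F (y, t) ^ 2) with hg
  have hinner : (fun y : ℝ => deriv (fun z : ℝ => u z t) y) = g :=
    funext fun y => (hux y).deriv
  have hXp : HasDerivAt (fun y => F (y, t) ^ 2) (2 * F (x, t) ^ 1 * P1) x := (hX x t).pow 2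
  have hnum : HasDerivAt (fun y => Fxx (y, t) * F (y, t) - Fx (y, t) * Fx (y, t))
      (P3 * P + P2 * P1 - (P2 * P1 + P1 * P2)) x :=
    ((hXxx x t).mul (hX x t)).sub ((hXx x t).mul (hXx x t))
  have hT3 : deriv (fun y : ℝ => deriv (fun z : ℝ => u z t) y) x
      = (t - t₀) * (((P3 * P + P2 * P1 - (P2 * P1 + P1 * P2)) * P ^ 2
          - (P2 * P - P1 * P1) * (2 * P ^ 1 * P1)) / (P ^ 2) ^ 2) := by
    rw [hinner]
    have hd := (hnum.div hXp (pow_ne_zero 2 hPne)).const_mul (t - t₀)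
    exact hd.deriv
  rw [hT1, hT2, hT3, hA, hu' x t]
  rw [← hP1, ← hP]
  field_simp
  ring
end

section
/- Let c, t₀ ∈ ℝ and b(t) = c(t-t₀)/(1 - 2c(t-t₀)). Then u(x,t) = b(t)(x + 1) solves the non-homogeneous Burgers equation ∂_t u - (1/(t-t₀)) ∂_x(u²) = ∂_xx u + (1/(t-t₀)) u on the open set where t ≠ t₀ and 1 - 2c(t-t₀) ≠ 0. -/
/-! On the invariant space spanned by `x` and `1`, the ansatz `u = b(t) (x + 1)` makes the
diffusion term vanish and turns the equation into the Riccati equation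
`b' = (b + 2 b²) / (t - t₀)`, which `b = c (t - t₀) / (1 - 2 c (t - t₀))` solves. -/

lemma deriv_sq_mul_add_one (a x : ℝ) :
    deriv (fun y : ℝ => (a * (y + 1)) ^ 2) x = 2 * a ^ 2 * (x + 1) := by
  have h : HasDerivAt (fun y : ℝ => (a * (y + 1)) ^ 2) (2 * (a * (x + 1)) ^ 1 * a) x := by
    simpa using (((hasDerivAt_id x).add_const 1).const_mul a).fun_pow 2
  rw [h.deriv]
  ring

lemma deriv_deriv_mul_add_one (a x : ℝ) :
    deriv (fun y : ℝ => deriv (fun z : ℝ => a * (z + 1)) y) x = 0 := by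
  have h (y : ℝ) : HasDerivAt (fun z : ℝ => a * (z + 1)) a y := by
    simpa using ((hasDerivAt_id y).add_const 1).const_mul a
  simp only [fun y => (h y).deriv, deriv_const]

lemma hasDerivAt_div_one_sub_two_mul (c t₀ t : ℝ) (hD : 1 - 2 * c * (t - t₀) ≠ 0) :
    HasDerivAt (fun s : ℝ => c * (s - t₀) / (1 - 2 * c * (s - t₀)))
      (c / (1 - 2 * c * (t - t₀)) ^ 2) t := by
  have hnum : HasDerivAt (fun s : ℝ => c * (s - t₀)) c t := by
    simpa using ((hasDerivAt_id t).sub_const t₀).const_mul c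
  have hden : HasDerivAt (fun s : ℝ => 1 - 2 * c * (s - t₀)) (-(2 * c)) t := by
    simpa using (((hasDerivAt_id t).sub_const t₀).const_mul (2 * c)).const_sub 1
  exact (hnum.fun_div hden hD).congr_deriv (by ring)

lemma hasDerivAt_riccati {c t₀ : ℝ} {b : ℝ → ℝ}
    (hb : ∀ t, b t = c * (t - t₀) / (1 - 2 * c * (t - t₀))) {t : ℝ}
    (ht : t ≠ t₀) (hD : 1 - 2 * c * (t - t₀) ≠ 0) :
    HasDerivAt b ((b t + 2 * b t ^ 2) / (t - t₀)) t := by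
  have ht' : t - t₀ ≠ 0 := sub_ne_zero.mpr ht
  rw [funext hb]
  convert hasDerivAt_div_one_sub_two_mul c t₀ t hD using 1
  field_simp
  ring

theorem burgers_invariant_solution (c t₀ : ℝ) (b : ℝ → ℝ)
    (hb : ∀ t, b t = c * (t - t₀) / (1 - 2 * c * (t - t₀)))
    (u : ℝ → ℝ → ℝ) (hu : ∀ x t, u x t = b t * (x + 1)) :
    ∀ x t : ℝ, t ≠ t₀ → 1 - 2 * c * (t - t₀) ≠ 0 →
      deriv (fun s : ℝ => u x s) t - (1 / (t - t₀)) * deriv (fun y : ℝ => (u y t) ^ 2) x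
        = deriv (fun y : ℝ => deriv (fun z : ℝ => u z t) y) x + (1 / (t - t₀)) * u x t := by
  intro x t ht hD
  simp only [hu]
  rw [((hasDerivAt_riccati hb ht hD).mul_const (x + 1)).deriv, deriv_sq_mul_add_one,
    deriv_deriv_mul_add_one]
  field_simp
  ring
end

section
/- Let C be a real constant and A(t) = C / (2 e^{Ct} + 1). Then u(x,t) = e^{Ct}(x + 1) solves ∂_t u - A(t) ∂_x(u²) = ∂_xx u + A(t) u on ℝ × ℝ. -/
/-! Along the ansatz `u = e^{Ct}(x + 1)` one has `∂ₜu = C u`, `∂ₓ(u²) = 2 e^{Ct} u` and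
`∂ₓₓu = 0`, so the equation reduces to `C = A(t) (2 e^{Ct} + 1)`, which is the definition of `A`. -/

open Real

lemma deriv_exp_const_mul_mul (C a t : ℝ) :
    deriv (fun s => exp (C * s) * a) t = C * (exp (C * t) * a) := by
  have h : HasDerivAt (fun s => exp (C * s)) (exp (C * t) * C) t :=
    ((hasDerivAt_id t).const_mul C).exp.congr_deriv (by simp)
  rw [(h.mul_const a).deriv]
  ring

lemma hasDerivAt_const_mul_add (a b y : ℝ) : HasDerivAt (fun z => a * (z + b)) a y := by
  simpa using ((hasDerivAt_id y).add_const b).const_mul a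

lemma deriv_sq_const_mul_add (a b x : ℝ) :
    deriv (fun y => (a * (y + b)) ^ 2) x = 2 * a * (a * (x + b)) := by
  rw [((hasDerivAt_const_mul_add a b x).fun_pow 2).deriv]
  ring

lemma deriv_deriv_const_mul_add (a b x : ℝ) :
    deriv (fun y => deriv (fun z => a * (z + b)) y) x = 0 := by
  simp only [fun y => (hasDerivAt_const_mul_add a b y).deriv, deriv_const]

theorem burgers_mittag_leffler_solution (C : ℝ) (A : ℝ → ℝ)
    (hA : ∀ t, A t = C / (2 * Real.exp (C * t) + 1))
    (u : ℝ → ℝ → ℝ) (hu : ∀ x t, u x t = Real.exp (C * t) * (x + 1)) :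
    ∀ x t : ℝ,
      deriv (fun s : ℝ => u x s) t - A t * deriv (fun y : ℝ => (u y t) ^ 2) x
        = deriv (fun y : ℝ => deriv (fun z : ℝ => u z t) y) x + A t * u x t := by
  intro x t
  simp only [hu, hA, deriv_exp_const_mul_mul, deriv_sq_const_mul_add, deriv_deriv_const_mul_add]
  have h_denom : 2 * exp (C * t) + 1 ≠ 0 := by positivity
  field_simp
  ring
end

section
/- Let C ∈ ℝ and A(t) = C/(2 e^{Ct} + 1). Then u(η,t) = e^{Ct} (log(tanh(η/2)) + 1) solves the hyperbolic Burgers-type equation ∂_t u - A(t) · sinh η ∂_η(u²) = (sinh η ∂_η)(sinh η ∂_η) u + A(t) u on (0,∞) × ℝ. -/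
/-! The separated ansatz works because `log (tanh (η / 2))` is the potential of the hyperbolic
Euler operator: `sinh η · ∂_η log (tanh (η / 2)) = 1`. Hence `sinh η ∂_η u = e^{Ct}` is constant
in `η`, the diffusion term vanishes, `sinh η ∂_η (u²) = 2 e^{Ct} u`, and `∂_t u = C u`; the
equation reduces to `C - 2 A e^{Ct} = A`, which is the definition of `A`. -/

open Real Filter Topology

namespace Real

lemma hasDerivAt_log_tanh_half {η : ℝ} (hη : η ≠ 0) :
    HasDerivAt (fun y => log (tanh (y / 2))) (sinh η)⁻¹ η := by
  have hs : sinh (η / 2) ≠ 0 := sinh_ne_zero.2 (by simpa using hη)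
  have hc : cosh (η / 2) ≠ 0 := (cosh_pos _).ne'
  have hhalf : HasDerivAt (fun y : ℝ => y / 2) (1 / 2) η := (hasDerivAt_id η).div_const 2
  have hlog : HasDerivAt (fun y => log (sinh (y / 2)) - log (cosh (y / 2)))
      (cosh (η / 2) * (1 / 2) / sinh (η / 2) - sinh (η / 2) * (1 / 2) / cosh (η / 2)) η :=
    (((hasDerivAt_sinh _).comp η hhalf).log hs).sub (((hasDerivAt_cosh _).comp η hhalf).log hc)
  have hval : cosh (η / 2) * (1 / 2) / sinh (η / 2) - sinh (η / 2) * (1 / 2) / cosh (η / 2)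
      = (sinh η)⁻¹ := by
    have hsη : sinh η = 2 * sinh (η / 2) * cosh (η / 2) := by rw [← sinh_two_mul]; ring_nf
    rw [hsη]
    field_simp
    linear_combination cosh_sq_sub_sinh_sq (η / 2)
  have htanh : (fun y => log (sinh (y / 2)) - log (cosh (y / 2)))
      =ᶠ[𝓝 η] fun y => log (tanh (y / 2)) := by
    filter_upwards [eventually_ne_nhds hη] with y hy
    rw [tanh_eq_sinh_div_cosh, log_div (sinh_ne_zero.2 (by simpa using hy)) (cosh_pos _).ne']
  exact hval ▸ hlog.congr_of_eventuallyEq htanh.symm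

lemma hasDerivAt_mul_log_tanh_half_add (a b : ℝ) {η : ℝ} (hη : η ≠ 0) :
    HasDerivAt (fun y => a * (log (tanh (y / 2)) + b)) (a / sinh η) η :=
  ((hasDerivAt_log_tanh_half hη).add_const b).const_mul a

lemma sinh_mul_deriv_mul_log_tanh_half_add (a b : ℝ) {η : ℝ} (hη : η ≠ 0) :
    sinh η * deriv (fun y => a * (log (tanh (y / 2)) + b)) η = a := by
  rw [(hasDerivAt_mul_log_tanh_half_add a b hη).deriv]
  field_simp [sinh_ne_zero.2 hη]

lemma deriv_sinh_mul_deriv_mul_log_tanh_half_add (a b : ℝ) {η : ℝ} (hη : η ≠ 0) :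
    deriv (fun y => sinh y * deriv (fun z => a * (log (tanh (z / 2)) + b)) y) η = 0 := by
  have hconst : (fun y => sinh y * deriv (fun z => a * (log (tanh (z / 2)) + b)) y)
      =ᶠ[𝓝 η] fun _ => a := by
    filter_upwards [eventually_ne_nhds hη] with y hy
    exact sinh_mul_deriv_mul_log_tanh_half_add a b hy
  rw [hconst.deriv_eq, deriv_const]

end Real

theorem hyperbolic_burgers_solution (C : ℝ) (A : ℝ → ℝ)
    (hA : ∀ t, A t = C / (2 * Real.exp (C * t) + 1))
    (u : ℝ → ℝ → ℝ)
    (hu : ∀ η t, u η t = Real.exp (C * t) * (Real.log (Real.tanh (η / 2)) + 1)) :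
    ∀ η : ℝ, 0 < η → ∀ t : ℝ,
      deriv (fun s : ℝ => u η s) t
          - A t * (Real.sinh η * deriv (fun y : ℝ => (u y t) ^ 2) η)
        = Real.sinh η * deriv (fun y : ℝ => Real.sinh y * deriv (fun z : ℝ => u z t) y) η
          + A t * u η t := by
  intro η hη t
  simp only [hu]
  set E := exp (C * t)
  set K := log (tanh (η / 2)) + 1
  have hη0 : η ≠ 0 := hη.ne'
  have htime : deriv (fun s => exp (C * s) * K) t = C * (E * K) := by
    have hexp : HasDerivAt (fun s => exp (C * s)) (E * C) t := by
      simpa using ((hasDerivAt_id t).const_mul C).exp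
    rw [(hexp.mul_const K).deriv]
    ring
  have hsquare : sinh η * deriv (fun y => (E * (log (tanh (y / 2)) + 1)) ^ 2) η
      = 2 * (E * K) * E := by
    rw [((hasDerivAt_mul_log_tanh_half_add E 1 hη0).fun_pow 2).deriv]
    field_simp [sinh_ne_zero.2 hη0]
    ring
  have hC : C = A t * (2 * E + 1) := by
    rw [hA, div_mul_cancel₀ _ (by positivity)]
  rw [htime, hsquare, deriv_sinh_mul_deriv_mul_log_tanh_half_add E 1 hη0, hC]
  ring
end

section
/- Let A ∈ ℝ and set A_η(t) = A_α(t) = A/(2(1 + 2 e^{At})). Then u(η,α,t) = e^{At}(log(tanh(η/2)) + α + 2) solves ∂_t u - A_η(t) · sinh η ∂_η(u²) - A_α(t) · ∂_α(u²) = Δ_H u + (A_η(t) + A_α(t)) u, where Δ_H = (1/sinh η) ∂_η(sinh η ∂_η) + (1/sinh²η) ∂_αα is the hyperbolic Laplacian in geodesic polar coordinates, on (0,∞) × ℝ × ℝ. -/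
/-! Since `d/dη log (tanh (η/2)) = 1 / sinh η`, the flux `sinh η ∂_η u` of the profile
`u = e^{At} (log (tanh (η/2)) + α + 2)` depends on `t` only and `∂_α u = e^{At}`, so `Δ_H u = 0`.
The remaining terms `∂_t u = A u` and `∂_η (u²) sinh η = ∂_α (u²) = 2 e^{At} u` balance because
`A = (2 + 4 e^{At}) · A/(2(1 + 2 e^{At}))`. -/

open Real Filter Topology

theorem hasDerivAt_log_tanh_half {y : ℝ} (hy : 0 < y) :
    HasDerivAt (fun w => log (tanh (w / 2))) (sinh y)⁻¹ y := by
  have hsinh : 0 < sinh (y / 2) := sinh_pos_iff.2 (half_pos hy)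
  have hcosh : 0 < cosh (y / 2) := cosh_pos _
  have hhalf : HasDerivAt (fun w : ℝ => w / 2) (1 / 2) y := (hasDerivAt_id y).div_const 2
  have hlog_sinh := hhalf.sinh.log hsinh.ne'
  have hlog_cosh := hhalf.cosh.log hcosh.ne'
  have hsplit : (fun w => log (sinh (w / 2)) - log (cosh (w / 2)))
      =ᶠ[𝓝 y] fun w => log (tanh (w / 2)) := by
    filter_upwards [lt_mem_nhds hy] with w hw
    rw [tanh_eq_sinh_div_cosh,
      log_div (sinh_pos_iff.2 (half_pos hw)).ne' (cosh_pos _).ne']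
  have hvalue : cosh (y / 2) * (1 / 2) / sinh (y / 2) - sinh (y / 2) * (1 / 2) / cosh (y / 2)
      = (sinh y)⁻¹ := by
    have hdouble : sinh y = 2 * sinh (y / 2) * cosh (y / 2) := by
      rw [← sinh_two_mul]; ring_nf
    rw [hdouble]
    field_simp
    linear_combination cosh_sq_sub_sinh_sq (y / 2)
  exact hvalue ▸ (hlog_sinh.sub hlog_cosh).congr_of_eventuallyEq hsplit.symm

noncomputable def hyperbolicBurgersSolution (A η α t : ℝ) : ℝ :=
  exp (A * t) * (log (tanh (η / 2)) + α + 2)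

namespace hyperbolicBurgersSolution

variable (A : ℝ) {η α t : ℝ}

theorem hasDerivAt_time :
    HasDerivAt (fun s => hyperbolicBurgersSolution A η α s)
      (A * hyperbolicBurgersSolution A η α t) t := by
  unfold hyperbolicBurgersSolution
  exact ((((hasDerivAt_id' t).const_mul A).exp).mul_const _).congr_deriv (by ring)

theorem hasDerivAt_angle :
    HasDerivAt (fun z => hyperbolicBurgersSolution A η z t) (exp (A * t)) α := by
  unfold hyperbolicBurgersSolution
  simpa using (((hasDerivAt_id α).const_add _).add_const 2).const_mul (exp (A * t))

theorem hasDerivAt_radial (hη : 0 < η) :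
    HasDerivAt (fun y => hyperbolicBurgersSolution A y α t) (exp (A * t) / sinh η) η := by
  unfold hyperbolicBurgersSolution
  simpa only [div_eq_mul_inv] using
    (((hasDerivAt_log_tanh_half hη).add_const α).add_const 2).const_mul (exp (A * t))

theorem sinh_mul_deriv_radial_eventuallyEq (hη : 0 < η) :
    (fun y => sinh y * deriv (fun w => hyperbolicBurgersSolution A w α t) y)
      =ᶠ[𝓝 η] fun _ => exp (A * t) := by
  filter_upwards [lt_mem_nhds hη] with y hy
  rw [(hasDerivAt_radial A hy).deriv, mul_div_cancel₀ _ (sinh_pos_iff.2 hy).ne']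

end hyperbolicBurgersSolution

theorem hyperbolic_2d_burgers (A : ℝ) (Aη Aα : ℝ → ℝ)
    (hAη : ∀ t, Aη t = A / (2 * (1 + 2 * Real.exp (A * t))))
    (hAα : ∀ t, Aα t = A / (2 * (1 + 2 * Real.exp (A * t))))
    (u : ℝ → ℝ → ℝ → ℝ)
    (hu : ∀ η α t, u η α t
      = Real.exp (A * t) * (Real.log (Real.tanh (η / 2)) + α + 2)) :
    ∀ η : ℝ, 0 < η → ∀ α t : ℝ,
      deriv (fun s : ℝ => u η α s) t
          - Aη t * (Real.sinh η * deriv (fun y : ℝ => (u y α t) ^ 2) η)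
          - Aα t * deriv (fun z : ℝ => (u η z t) ^ 2) α
        = ((1 / Real.sinh η) *
              deriv (fun y : ℝ => Real.sinh y * deriv (fun w : ℝ => u w α t) y) η
            + (1 / Real.sinh η ^ 2) *
              deriv (fun z : ℝ => deriv (fun w : ℝ => u η w t) z) α)
          + (Aη t + Aα t) * u η α t := by
  intro η hη α t
  obtain rfl : u = hyperbolicBurgersSolution A := funext₃ hu
  open hyperbolicBurgersSolution in
  have hangular_flux : (fun z => deriv (fun w => hyperbolicBurgersSolution A η w t) z)
      = fun _ => exp (A * t) := funext fun _ => (hasDerivAt_angle A).deriv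
  open hyperbolicBurgersSolution in
  rw [(hasDerivAt_time A).deriv, ((hasDerivAt_radial A hη).fun_pow 2).deriv,
    ((hasDerivAt_angle A).fun_pow 2).deriv, (sinh_mul_deriv_radial_eventuallyEq A hη).deriv_eq,
    hangular_flux, deriv_const, deriv_const, hAη, hAα]
  have hsinh : sinh η ≠ 0 := (sinh_pos_iff.2 hη).ne'
  have hdenom : 1 + 2 * exp (A * t) ≠ 0 := by positivity
  field_simp
  ring
end
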